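/- arXiv:math/0607134 — 2 statements merged into one kernel-verified Lean document; each statement's English description precedes it below -/
import Mathlib

section
/- Let k be a positive integer and ρ_k = π_{4πk} the Schrödinger representation. For each j ∈ A_k = {0,...,2k-1}^n, the distribution ν_j(f) = Σ_{m ∈ ℤ^n} f̂(2km+j) is invariant under ρ_k(γ) for all γ in the lattice Γ = ℤ^n × ℤ^n × (1/2)ℤ, i.e., ν_j(ρ_k(γ)f) = ν_j(f) for all Schwartz f. -/
open scoped BigOperators Real
open MeasureTheory

noncomputable section

abbrev Heis (n : ℕ) := (Fin n → ℝ) × (Fin n → ℝ) × ℝ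

def dot {n : ℕ} (x u : Fin n → ℝ) : ℝ := ∑ i, x i * u i

def fhat {n : ℕ} (f : (Fin n → ℝ) → ℂ) (η : Fin n → ℝ) : ℂ :=
  ∫ x : Fin n → ℝ, f x * Complex.exp (-2 * π * Complex.I * dot x η)

/-- The Schrödinger representation `ρ_k = π_{4πk}`:
`(ρ_k(x,u,ξ)f)(v) = e^{4πikξ} e^{4πik(x·v + (1/2)x·u)} f(v+u)`. -/
def rho {n : ℕ} (k : ℤ) (g : Heis n) (f : (Fin n → ℝ) → ℂ) : (Fin n → ℝ) → ℂ :=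
  fun v =>
    Complex.exp (4 * π * k * Complex.I * g.2.2) *
      Complex.exp (4 * π * k * Complex.I * (dot g.1 v + (1 / 2) * dot g.1 g.2.1)) *
      f (v + g.2.1)

/-- The distribution `ν_j(f) = Σ_m f̂(2km+j)`. -/
def nuDist {n : ℕ} (k : ℤ) (j : Fin n → ℤ) (f : (Fin n → ℝ) → ℂ) : ℂ :=
  ∑' m : Fin n → ℤ, fhat f (fun i => ((2 * k * m i + j i : ℤ) : ℝ))

/-- For a positive integer `k` and `j ∈ A_k`, the distribution `ν_j` is invariant
under `ρ_k(γ)` for every `γ` in the lattice `Γ = ℤ^n × ℤ^n × (1/2)ℤ`. -/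
theorem nu_invariant {n : ℕ} (k : ℤ) (hk : 0 < k) (j : Fin n → ℤ)
    (hj : ∀ i, 0 ≤ j i ∧ j i ≤ 2 * k - 1)
    (f : SchwartzMap (Fin n → ℝ) ℂ)
    (a b : Fin n → ℤ) (c : ℤ) :
    nuDist k j
        (rho k ((fun i => (a i : ℝ)), (fun i => (b i : ℝ)), ((c : ℝ) / 2)) (⇑f)) =
      nuDist k j (⇑f) := by
  classical
  set A : Fin n → ℝ := fun i => (a i : ℝ) with hA
  set B : Fin n → ℝ := fun i => (b i : ℝ) with hB
  set η : (Fin n → ℤ) → (Fin n → ℝ) := fun m => fun i => ((2 * k * m i + j i : ℤ) : ℝ)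
    with hη
  have key : ∀ m : Fin n → ℤ,
      fhat (rho k (A, B, ((c : ℝ) / 2)) (⇑f)) (η m) = fhat (⇑f) (η (m - a)) := by
    intro m
    have hsplit : ∀ v : Fin n → ℝ,
        dot v (η (m - a)) = dot v (η m) - 2 * (k : ℝ) * dot v A := by
      intro v
      simp only [dot, hη, hA, Pi.sub_apply, Finset.mul_sum, ← Finset.sum_sub_distrib]
      refine Finset.sum_congr rfl fun i _ => ?_
      push_cast
      ring
    have hBη : dot B (η (m - a)) =
        ((∑ i, b i * (2 * k * (m i - a i) + j i) : ℤ) : ℝ) := by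
      simp only [dot, hη, hB, Pi.sub_apply]
      push_cast
      ring
    have hAB : dot A B = ((∑ i, a i * b i : ℤ) : ℝ) := by
      simp only [dot, hA, hB]
      push_cast
      ring
    set N : ℤ := k * c + k * (∑ i, a i * b i) +
      (∑ i, b i * (2 * k * (m i - a i) + j i)) with hN
    have hpt : ∀ v : Fin n → ℝ,
        (rho k (A, B, ((c : ℝ) / 2)) (⇑f)) v *
            Complex.exp (-2 * π * Complex.I * dot v (η m)) =
          f (v + B) * Complex.exp (-2 * π * Complex.I * dot (v + B) (η (m - a))) := by
      intro v
      have hdotadd : dot (v + B) (η (m - a)) = dot v (η (m - a)) + dot B (η (m - a)) := by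
        simp [dot, add_mul, Finset.sum_add_distrib]
      have hcomm : dot A v = dot v A := by
        simp [dot, mul_comm]
      have hexp :
          Complex.exp (4 * π * k * Complex.I * ((c : ℝ) / 2 : ℝ) +
              (4 * π * k * Complex.I * (dot A v + (1 / 2) * dot A B) +
                -2 * π * Complex.I * dot v (η m))) =
            Complex.exp (-2 * π * Complex.I * dot (v + B) (η (m - a))) := by
        rw [Complex.exp_eq_exp_iff_exists_int]
        refine ⟨N, ?_⟩
        rw [hdotadd, hsplit v, hcomm, hBη, hAB, hN]
        push_cast
        ring
      calc (rho k (A, B, ((c : ℝ) / 2)) (⇑f)) v *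
            Complex.exp (-2 * π * Complex.I * dot v (η m))
          = f (v + B) *
              Complex.exp (4 * π * k * Complex.I * ((c : ℝ) / 2 : ℝ) +
                (4 * π * k * Complex.I * (dot A v + (1 / 2) * dot A B) +
                  -2 * π * Complex.I * dot v (η m))) := by
            simp only [rho, Complex.exp_add]
            push_cast
            ring
        _ = f (v + B) * Complex.exp (-2 * π * Complex.I * dot (v + B) (η (m - a))) := by
            rw [hexp]
    have : fhat (rho k (A, B, ((c : ℝ) / 2)) (⇑f)) (η m) =
        ∫ v : Fin n → ℝ,
          f (v + B) * Complex.exp (-2 * π * Complex.I * dot (v + B) (η (m - a))) := by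
      unfold fhat
      exact integral_congr_ae (Filter.Eventually.of_forall hpt)
    rw [this, fhat]
    exact integral_add_right_eq_self
      (fun w => f w * Complex.exp (-2 * π * Complex.I * dot w (η (m - a)))) B
  unfold nuDist
  calc (∑' m : Fin n → ℤ,
          fhat (rho k (A, B, ((c : ℝ) / 2)) (⇑f)) (fun i => ((2 * k * m i + j i : ℤ) : ℝ)))
      = ∑' m : Fin n → ℤ, fhat (⇑f) (η (m - a)) := by
        exact tsum_congr fun m => key m
    _ = ∑' m : Fin n → ℤ, fhat (⇑f) (η m) := by
        exact (Equiv.subRight a).tsum_eq fun m => fhat (⇑f) (η m)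
    _ = ∑' m : Fin n → ℤ, fhat (⇑f) (fun i => ((2 * k * m i + j i : ℤ) : ℝ)) := rfl
end
end

section
/- Let k be a positive integer, j ∈ {0,...,2k-1}^n, and F_j(x,u,ξ) = ν_j(ρ_k(x,u,ξ)f) for a Schwartz function f, where ν_j(g) = Σ_{m∈ℤ^n} ĝ(2km+j). Then F_j(x,u,ξ) = V_{k,j} g_j(u,-x,ξ), where g_j(s) = f̂(2ks+j) and V_{k,j}h(x,u,ξ) = e^{2πi j·x} e^{4πkiξ} e^{2πki x·u} Σ_{m∈ℤ^n} e^{4πki m·x} h(u+m). -/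
open scoped BigOperators Real
open MeasureTheory

noncomputable section

lemma dot_comm {n : ℕ} (x u : Fin n → ℝ) : dot x u = dot u x := by
  simp [dot, mul_comm]

lemma dot_sub_left {n : ℕ} (x y u : Fin n → ℝ) :
    dot (x - y) u = dot x u - dot y u := by
  simp [dot, sub_mul, Finset.sum_sub_distrib]

lemma fhat_rho {n : ℕ} (k : ℤ) (x u : Fin n → ℝ) (ξ : ℝ) (f : (Fin n → ℝ) → ℂ)
    (η : Fin n → ℝ) :
    fhat (rho k (x, u, ξ) f) η =
      Complex.exp (4 * π * (k : ℂ) * Complex.I * ξ) *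
        Complex.exp (2 * π * (k : ℂ) * Complex.I * dot x u) *
        (Complex.exp (2 * π * Complex.I * dot u (fun i => η i - 2 * (k : ℝ) * x i)) *
          fhat f (fun i => η i - 2 * (k : ℝ) * x i)) := by
  have hζ : ∀ v : Fin n → ℝ,
      dot v (fun i => η i - 2 * (k : ℝ) * x i) = dot v η - 2 * (k : ℝ) * dot x v := by
    intro v
    simp only [dot, Finset.mul_sum, ← Finset.sum_sub_distrib]
    exact Finset.sum_congr rfl fun i _ => by ring
  simp only [fhat, rho]
  have h1 : (fun v : Fin n → ℝ =>
      Complex.exp (4 * π * (k : ℂ) * Complex.I * ξ) *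
        Complex.exp (4 * π * (k : ℂ) * Complex.I * (dot x v + (1 / 2) * dot x u)) * f (v + u) *
        Complex.exp (-2 * π * Complex.I * dot v η))
      = fun v : Fin n → ℝ =>
        (Complex.exp (4 * π * (k : ℂ) * Complex.I * ξ) *
          Complex.exp (2 * π * (k : ℂ) * Complex.I * dot x u)) *
          ((fun w => f w *
            Complex.exp (-2 * π * Complex.I * dot (w - u) (fun i => η i - 2 * (k : ℝ) * x i)))
            (v + u)) := by
    funext v
    simp only [add_sub_cancel_right]
    rw [hζ v]
    have l1 : Complex.exp (4 * π * (k : ℂ) * Complex.I * ξ) *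
        Complex.exp (4 * π * (k : ℂ) * Complex.I * (dot x v + (1 / 2) * dot x u)) * f (v + u) *
        Complex.exp (-2 * π * Complex.I * dot v η)
        = Complex.exp (4 * π * (k : ℂ) * Complex.I * ξ +
            4 * π * (k : ℂ) * Complex.I * (dot x v + (1 / 2) * dot x u) +
            -2 * π * Complex.I * dot v η) * f (v + u) := by
      rw [Complex.exp_add, Complex.exp_add]; ring
    have l2 : (Complex.exp (4 * π * (k : ℂ) * Complex.I * ξ) *
        Complex.exp (2 * π * (k : ℂ) * Complex.I * dot x u)) *
        (f (v + u) * Complex.exp (-2 * π * Complex.I * ((dot v η - 2 * (k : ℝ) * dot x v : ℝ) : ℂ)))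
        = Complex.exp (4 * π * (k : ℂ) * Complex.I * ξ +
            2 * π * (k : ℂ) * Complex.I * dot x u +
            -2 * π * Complex.I * ((dot v η - 2 * (k : ℝ) * dot x v : ℝ) : ℂ)) * f (v + u) := by
      rw [Complex.exp_add, Complex.exp_add]; ring
    rw [l1, l2]
    congr 2
    push_cast
    ring
  rw [h1, MeasureTheory.integral_const_mul,
    MeasureTheory.integral_add_right_eq_self
      (fun w => f w *
        Complex.exp (-2 * π * Complex.I * dot (w - u) (fun i => η i - 2 * (k : ℝ) * x i))) u]
  have h2 : (fun w : Fin n → ℝ => f w *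
      Complex.exp (-2 * π * Complex.I * dot (w - u) (fun i => η i - 2 * (k : ℝ) * x i)))
      = fun w : Fin n → ℝ =>
        Complex.exp (2 * π * Complex.I * dot u (fun i => η i - 2 * (k : ℝ) * x i)) *
          (f w * Complex.exp (-2 * π * Complex.I * dot w (fun i => η i - 2 * (k : ℝ) * x i))) := by
    funext w
    rw [dot_sub_left]
    have : Complex.exp (2 * (π:ℂ) * Complex.I * ((dot u fun i => η i - 2 * (k:ℝ) * x i : ℝ) : ℂ)) *
        (f w * Complex.exp (-2 * (π:ℂ) * Complex.I * ((dot w fun i => η i - 2 * (k:ℝ) * x i : ℝ) : ℂ)))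
        = f w * (Complex.exp (2 * (π:ℂ) * Complex.I * ((dot u fun i => η i - 2 * (k:ℝ) * x i : ℝ) : ℂ)) *
          Complex.exp (-2 * (π:ℂ) * Complex.I * ((dot w fun i => η i - 2 * (k:ℝ) * x i : ℝ) : ℂ))) := by
      ring
    rw [this, ← Complex.exp_add]
    congr 2
    push_cast
    ring
  rw [h2, MeasureTheory.integral_const_mul]

/-- The Weil–Brezin transform `V_k`. -/
def weilBrezin {n : ℕ} (k : ℕ) (f : (Fin n → ℝ) → ℂ) (g : Heis n) : ℂ :=
  Complex.exp (4 * π * (k : ℝ) * Complex.I * g.2.2) *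
    Complex.exp (2 * π * (k : ℝ) * Complex.I * dot g.1 g.2.1) *
    ∑' m : Fin n → ℤ,
      Complex.exp (4 * π * (k : ℝ) * Complex.I * ∑ i, (m i : ℝ) * g.1 i) *
        f (g.2.1 + fun i => (m i : ℝ))

/-- The twisted Weil–Brezin transform `V_{k,j} h(x,u,ξ) = e^{2πi j·x} V_k h(x,u,ξ)`. -/
def weilBrezinJ {n : ℕ} (k : ℕ) (j : Fin n → ℤ) (h : (Fin n → ℝ) → ℂ) (g : Heis n) : ℂ :=
  Complex.exp (2 * π * Complex.I * ∑ i, (j i : ℝ) * g.1 i) * weilBrezin k h g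

/-- The matrix coefficient `F_j(x,u,ξ) = (ν_j, ρ_k(x,u,ξ)f)` equals
`V_{k,j} g_j(u,-x,ξ)` where `g_j(s) = f̂(2ks+j)`. -/
theorem matCoeff_eq_weilBrezin {n : ℕ} (k : ℕ) (hk : 0 < k)
    (j : Fin n → ℤ) (hj : ∀ i, 0 ≤ j i ∧ j i ≤ 2 * (k : ℤ) - 1)
    (f : SchwartzMap (Fin n → ℝ) ℂ) (x u : Fin n → ℝ) (ξ : ℝ) :
    (∑' m : Fin n → ℤ,
        fhat (rho (k : ℤ) (x, u, ξ) (⇑f)) (fun i => ((2 * (k : ℤ) * m i + j i : ℤ) : ℝ))) =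
      weilBrezinJ k j (fun s => fhat (⇑f) (fun i => 2 * (k : ℝ) * s i + (j i : ℝ)))
        (u, -x, ξ) := by
  simp only [weilBrezinJ, weilBrezin]
  rw [← tsum_mul_left, ← tsum_mul_left]
  refine tsum_congr fun m => ?_
  rw [fhat_rho]
  have hh : (fun i => (((2 * (k : ℤ) * m i + j i : ℤ) : ℝ)) - 2 * ((k : ℤ) : ℝ) * x i)
      = fun i => 2 * (k : ℝ) * ((-x + fun i' => ((m i' : ℤ) : ℝ)) i) + (j i : ℝ) := by
    funext i
    simp only [Pi.add_apply, Pi.neg_apply]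
    push_cast
    ring
  rw [hh]
  have hd : dot u (fun i => 2 * (k : ℝ) * ((-x + fun i' => ((m i' : ℤ) : ℝ)) i) + (j i : ℝ))
      = 2 * (k : ℝ) * (∑ i, ((m i : ℤ) : ℝ) * u i) + (∑ i, ((j i : ℤ) : ℝ) * u i)
        - 2 * (k : ℝ) * dot u x := by
    simp only [dot, Pi.add_apply, Pi.neg_apply, Finset.mul_sum, ← Finset.sum_add_distrib,
      ← Finset.sum_sub_distrib]
    exact Finset.sum_congr rfl fun i _ => by ring
  rw [hd]
  have hnx : dot u (-x) = -(dot u x) := by simp [dot]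
  rw [hnx, dot_comm x u]
  set H := fhat (⇑f) (fun i => 2 * (k : ℝ) * ((-x + fun i' => ((m i' : ℤ) : ℝ)) i) + (j i : ℝ))
  have l1 : ∀ a b c : ℂ, Complex.exp a * Complex.exp b * (Complex.exp c * H)
      = Complex.exp (a + b + c) * H := by
    intro a b c; rw [Complex.exp_add, Complex.exp_add]; ring
  have l2 : ∀ a b c d : ℂ, Complex.exp a * (Complex.exp b * Complex.exp c * (Complex.exp d * H))
      = Complex.exp (a + b + c + d) * H := by
    intro a b c d; rw [Complex.exp_add, Complex.exp_add, Complex.exp_add]; ring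
  rw [l1, l2]
  congr 2
  push_cast
  ring
end
end
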